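/- arXiv:2512.13227 — 2 statements merged into one kernel-verified Lean document; each statement's English description precedes it below -/
import Mathlib

section
/- Suppose f : ℝ^d → ℝ is differentiable and satisfies ‖∇f(x) − ∇f(y)‖₊ ≤ (L₀ + L₁‖∇f(y)‖₊) exp(L₁‖x−y‖) ‖x−y‖ for all x, y. Then the Bregman divergence satisfies D_f(x,y) := f(x) − f(y) − ⟨∇f(y), x−y⟩ ≤ (1/2)(L₀ + L₁‖∇f(y)‖₊) exp(L₁‖x−y‖) ‖x−y‖². -/
lemma N_zero {d : ℕ} (N : EuclideanSpace ℝ (Fin d) → ℝ)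
    (hN_smul : ∀ (c : ℝ) x, N (c • x) = |c| * N x) : N 0 = 0 := by
  have := hN_smul 0 0
  simpa using this

lemma N_nonneg {d : ℕ} (N : EuclideanSpace ℝ (Fin d) → ℝ)
    (hN_add : ∀ x y, N (x + y) ≤ N x + N y)
    (hN_smul : ∀ (c : ℝ) x, N (c • x) = |c| * N x) (x : EuclideanSpace ℝ (Fin d)) :
    0 ≤ N x := by
  have h1 : N ((-1 : ℝ) • x) = N x := by rw [hN_smul]; simp
  have h2 := hN_add x ((-1 : ℝ) • x)
  rw [h1] at h2
  have h3 : x + (-1 : ℝ) • x = 0 := by module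
  rw [h3, N_zero N hN_smul] at h2
  linarith

lemma N_neg {d : ℕ} (N : EuclideanSpace ℝ (Fin d) → ℝ)
    (hN_smul : ∀ (c : ℝ) x, N (c • x) = |c| * N x) (x : EuclideanSpace ℝ (Fin d)) :
    N (-x) = N x := by
  have := hN_smul (-1) x
  simpa using this

lemma coord_le_norm {d : ℕ} (v : EuclideanSpace ℝ (Fin d)) (i : Fin d) : |v i| ≤ ‖v‖ := by
  have h := EuclideanSpace.norm_eq v
  rw [h]
  have : |v i| = Real.sqrt (‖v i‖ ^ 2) := by
    rw [Real.sqrt_sq_eq_abs]; simp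
  rw [this]
  apply Real.sqrt_le_sqrt
  exact Finset.single_le_sum (f := fun j => ‖v j‖ ^ 2) (fun j _ => sq_nonneg _)
    (Finset.mem_univ i)

lemma N_upper {d : ℕ} (N : EuclideanSpace ℝ (Fin d) → ℝ)
    (hN_add : ∀ x y, N (x + y) ≤ N x + N y)
    (hN_smul : ∀ (c : ℝ) x, N (c • x) = |c| * N x) :
    ∃ C : ℝ, 0 ≤ C ∧ ∀ v : EuclideanSpace ℝ (Fin d), N v ≤ C * ‖v‖ := by
  classical
  refine ⟨∑ i : Fin d, N (EuclideanSpace.single i 1), ?_, ?_⟩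
  · exact Finset.sum_nonneg fun i _ => N_nonneg N hN_add hN_smul _
  · intro v
    have hv : v = ∑ i : Fin d, (v i) • EuclideanSpace.single i (1 : ℝ) := by
      ext j
      rw [WithLp.ofLp_sum, Fintype.sum_apply]
      simp [EuclideanSpace.single_apply]
    calc N v = N (∑ i : Fin d, (v i) • EuclideanSpace.single i (1 : ℝ)) := by rw [← hv]
      _ ≤ ∑ i : Fin d, N ((v i) • EuclideanSpace.single i (1 : ℝ)) :=
          Finset.le_sum_of_subadditive N (N_zero N hN_smul).le hN_add _ _
      _ = ∑ i : Fin d, |v i| * N (EuclideanSpace.single i (1 : ℝ)) := by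
          simp [hN_smul]
      _ ≤ ∑ i : Fin d, ‖v‖ * N (EuclideanSpace.single i (1 : ℝ)) :=
          Finset.sum_le_sum fun i _ => mul_le_mul_of_nonneg_right (coord_le_norm v i)
            (N_nonneg N hN_add hN_smul _)
      _ = (∑ i : Fin d, N (EuclideanSpace.single i 1)) * ‖v‖ := by
          rw [Finset.sum_mul]; simp [mul_comm]

lemma N_continuous {d : ℕ} (N : EuclideanSpace ℝ (Fin d) → ℝ)
    (hN_add : ∀ x y, N (x + y) ≤ N x + N y)
    (hN_smul : ∀ (c : ℝ) x, N (c • x) = |c| * N x) : Continuous N := by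
  obtain ⟨C, hC0, hC⟩ := N_upper N hN_add hN_smul
  rw [Metric.continuous_iff]
  intro a ε hε
  by_cases hCpos : C = 0
  · refine ⟨1, one_pos, fun b _ => ?_⟩
    have hb : N b = 0 := le_antisymm (by simpa [hCpos] using hC b) (N_nonneg N hN_add hN_smul b)
    have ha : N a = 0 := le_antisymm (by simpa [hCpos] using hC a) (N_nonneg N hN_add hN_smul a)
    simpa [Real.dist_eq, hb, ha] using hε
  · have hCpos' : 0 < C := lt_of_le_of_ne hC0 (Ne.symm hCpos)
    refine ⟨ε / C, div_pos hε hCpos', fun b hb => ?_⟩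
    rw [Real.dist_eq]
    have key : ∀ u w : EuclideanSpace ℝ (Fin d), N u - N w ≤ N (u - w) := by
      intro u w
      have := hN_add (u - w) w
      simp only [sub_add_cancel] at this
      linarith
    have h1 : |N b - N a| ≤ N (b - a) := by
      rcases abs_cases (N b - N a) with ⟨h, _⟩ | ⟨h, _⟩
      · rw [h]; exact key b a
      · rw [h]
        have := key a b
        have h2 : N (a - b) = N (b - a) := by
          rw [← N_neg N hN_smul (a - b)]; congr 1; abel
        linarith
    calc |N b - N a| ≤ N (b - a) := h1
      _ ≤ C * ‖b - a‖ := hC _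
      _ < C * (ε / C) := by
          apply mul_lt_mul_of_pos_left _ hCpos'
          rw [← dist_eq_norm] at *
          exact hb
      _ = ε := by field_simp

lemma N_lower {d : ℕ} (N : EuclideanSpace ℝ (Fin d) → ℝ)
    (hN_add : ∀ x y, N (x + y) ≤ N x + N y)
    (hN_smul : ∀ (c : ℝ) x, N (c • x) = |c| * N x)
    (hN_pos : ∀ x, x ≠ 0 → 0 < N x) :
    ∃ c : ℝ, 0 < c ∧ ∀ v : EuclideanSpace ℝ (Fin d), c * ‖v‖ ≤ N v := by
  by_cases hd : ∀ v : EuclideanSpace ℝ (Fin d), v = 0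
  · exact ⟨1, one_pos, fun v => by rw [hd v]; simp [N_zero N hN_smul]⟩
  · push_neg at hd
    obtain ⟨v₀, hv₀⟩ := hd
    have hsph : (Metric.sphere (0 : EuclideanSpace ℝ (Fin d)) 1).Nonempty :=
      ⟨‖v₀‖⁻¹ • v₀, by simp [norm_smul, norm_ne_zero_iff.mpr hv₀,
        inv_mul_cancel₀ (norm_ne_zero_iff.mpr hv₀)]⟩
    have hcomp : IsCompact (Metric.sphere (0 : EuclideanSpace ℝ (Fin d)) 1) :=
      isCompact_sphere 0 1
    obtain ⟨w, hw, hwmin⟩ := hcomp.exists_isMinOn hsph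
      ((N_continuous N hN_add hN_smul).continuousOn)
    have hw1 : ‖w‖ = 1 := by simpa using hw
    have hwne : w ≠ 0 := by intro h; rw [h] at hw1; simp at hw1
    refine ⟨N w, hN_pos w hwne, fun v => ?_⟩
    by_cases hv : v = 0
    · simp [hv, N_zero N hN_smul]
    · have hvn : ‖v‖ ≠ 0 := norm_ne_zero_iff.mpr hv
      have hmem : ‖v‖⁻¹ • v ∈ Metric.sphere (0 : EuclideanSpace ℝ (Fin d)) 1 := by
        simp [norm_smul, inv_mul_cancel₀ hvn]
      have this : N w ≤ N (‖v‖⁻¹ • v) := hwmin hmem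
      have hNs : N (‖v‖⁻¹ • v) = ‖v‖⁻¹ * N v := by
        rw [hN_smul]; congr 1
        rw [abs_of_nonneg (by positivity)]
      rw [hNs] at this
      have : N w * ‖v‖ ≤ ‖v‖⁻¹ * N v * ‖v‖ :=
        mul_le_mul_of_nonneg_right this (norm_nonneg v)
      calc N w * ‖v‖ ≤ ‖v‖⁻¹ * N v * ‖v‖ := this
        _ = N v := by field_simp


/-- The dual norm of an arbitrary norm `N` on `ℝ^d`. -/
noncomputable def dualNorm {d : ℕ} (N : EuclideanSpace ℝ (Fin d) → ℝ)
    (u : EuclideanSpace ℝ (Fin d)) : ℝ :=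
  sSup ((fun v => (inner ℝ u v : ℝ)) '' {v | N v ≤ 1})

lemma dual_bddAbove {d : ℕ} (N : EuclideanSpace ℝ (Fin d) → ℝ)
    (hN_add : ∀ x y, N (x + y) ≤ N x + N y)
    (hN_smul : ∀ (c : ℝ) x, N (c • x) = |c| * N x)
    (hN_pos : ∀ x, x ≠ 0 → 0 < N x) (u : EuclideanSpace ℝ (Fin d)) :
    BddAbove ((fun v => (inner ℝ u v : ℝ)) '' {v | N v ≤ 1}) := by
  obtain ⟨c, hc, hlow⟩ := N_lower N hN_add hN_smul hN_pos
  refine ⟨‖u‖ * c⁻¹, ?_⟩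
  rintro _ ⟨w, hw, rfl⟩
  have hw1 : N w ≤ 1 := hw
  have hwn : ‖w‖ ≤ c⁻¹ := by
    have h := (hlow w).trans hw1
    calc ‖w‖ = c⁻¹ * (c * ‖w‖) := by field_simp
      _ ≤ c⁻¹ * 1 := mul_le_mul_of_nonneg_left h (by positivity)
      _ = c⁻¹ := mul_one _
  calc (inner ℝ u w : ℝ) ≤ ‖u‖ * ‖w‖ := real_inner_le_norm u w
    _ ≤ ‖u‖ * c⁻¹ := mul_le_mul_of_nonneg_left hwn (norm_nonneg u)

lemma dual_nonneg {d : ℕ} (N : EuclideanSpace ℝ (Fin d) → ℝ)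
    (hN_add : ∀ x y, N (x + y) ≤ N x + N y)
    (hN_smul : ∀ (c : ℝ) x, N (c • x) = |c| * N x)
    (hN_pos : ∀ x, x ≠ 0 → 0 < N x) (u : EuclideanSpace ℝ (Fin d)) :
    0 ≤ dualNorm N u := by
  apply le_csSup (dual_bddAbove N hN_add hN_smul hN_pos u)
  exact ⟨0, by simp [N_zero N hN_smul], by simp⟩

lemma inner_le_dual {d : ℕ} (N : EuclideanSpace ℝ (Fin d) → ℝ)
    (hN_add : ∀ x y, N (x + y) ≤ N x + N y)
    (hN_smul : ∀ (c : ℝ) x, N (c • x) = |c| * N x)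
    (hN_pos : ∀ x, x ≠ 0 → 0 < N x) (u v : EuclideanSpace ℝ (Fin d)) :
    (inner ℝ u v : ℝ) ≤ dualNorm N u * N v := by
  by_cases hv : v = 0
  · simp [hv, N_zero N hN_smul]
  · have hNv : 0 < N v := hN_pos v hv
    have hmem : N ((N v)⁻¹ • v) ≤ 1 := by
      rw [hN_smul, abs_of_nonneg (by positivity), inv_mul_cancel₀ (ne_of_gt hNv)]
    have h1 : (inner ℝ u ((N v)⁻¹ • v) : ℝ) ≤ dualNorm N u :=
      le_csSup (dual_bddAbove N hN_add hN_smul hN_pos u) ⟨_, hmem, rfl⟩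
    rw [real_inner_smul_right] at h1
    have := mul_le_mul_of_nonneg_right h1 (le_of_lt hNv)
    calc (inner ℝ u v : ℝ) = (N v)⁻¹ * (inner ℝ u v : ℝ) * N v := by field_simp
      _ ≤ dualNorm N u * N v := this


/-- If `‖∇f(x) − ∇f(y)‖₊ ≤ (L₀ + L₁‖∇f(y)‖₊) exp(L₁‖x−y‖) ‖x−y‖` for all `x, y`, then the
Bregman divergence satisfies
`f(x) − f(y) − ⟨∇f(y), x−y⟩ ≤ (1/2)(L₀ + L₁‖∇f(y)‖₊) exp(L₁‖x−y‖) ‖x−y‖²`. -/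
theorem stmt_5 {d : ℕ} (f : EuclideanSpace ℝ (Fin d) → ℝ) (hf : Differentiable ℝ f)
    (N : EuclideanSpace ℝ (Fin d) → ℝ)
    (hN_add : ∀ x y, N (x + y) ≤ N x + N y)
    (hN_smul : ∀ (c : ℝ) x, N (c • x) = |c| * N x)
    (hN_pos : ∀ x, x ≠ 0 → 0 < N x)
    (L₀ L₁ : ℝ) (hL₀ : 0 ≤ L₀) (hL₁ : 0 ≤ L₁)
    (hsmooth : ∀ x y,
      dualNorm N (gradient f x - gradient f y) ≤
        (L₀ + L₁ * dualNorm N (gradient f y)) * Real.exp (L₁ * N (x - y)) * N (x - y)) :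
    ∀ x y,
      f x - f y - (inner ℝ (gradient f y) (x - y) : ℝ) ≤
        (1 / 2) * (L₀ + L₁ * dualNorm N (gradient f y)) * Real.exp (L₁ * N (x - y)) *
          N (x - y) ^ 2 := by
  intro x y
  set s : EuclideanSpace ℝ (Fin d) := x - y with hs
  set K : ℝ := L₀ + L₁ * dualNorm N (gradient f y) with hK
  have hK0 : 0 ≤ K := by
    have := dual_nonneg N hN_add hN_smul hN_pos (gradient f y)
    have : 0 ≤ L₁ * dualNorm N (gradient f y) := mul_nonneg hL₁ this
    linarith
  have hNs0 : 0 ≤ N s := N_nonneg N hN_add hN_smul s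
  set A : ℝ := K * Real.exp (L₁ * N s) * N s ^ 2 with hA
  have hA0 : 0 ≤ A := by positivity
  set h : ℝ → ℝ := fun t => f (y + t • s) - f y - t * (inner ℝ (gradient f y) s : ℝ) with hh
  -- derivative of h
  have hderiv : ∀ t : ℝ, HasDerivAt h
      ((inner ℝ (gradient f (y + t • s)) s : ℝ) - (inner ℝ (gradient f y) s : ℝ)) t := by
    intro t
    have hline : HasDerivAt (fun t : ℝ => y + t • s) s t := by
      have h1 : HasDerivAt (fun t : ℝ => t • s) ((1 : ℝ) • s) t :=
        (hasDerivAt_id t).smul_const s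
      simpa using h1.const_add y
    have hgrad := (hf (y + t • s)).hasGradientAt
    have hcomp := hgrad.hasFDerivAt.comp_hasDerivAt t hline
    have heq : (InnerProductSpace.toDual ℝ _ (gradient f (y + t • s))) s
        = (inner ℝ (gradient f (y + t • s)) s : ℝ) := rfl
    rw [heq] at hcomp
    have hlin : HasDerivAt (fun t : ℝ => t * (inner ℝ (gradient f y) s : ℝ))
        ((inner ℝ (gradient f y) s : ℝ)) t := by
      simpa using (hasDerivAt_id t).mul_const ((inner ℝ (gradient f y) s : ℝ))
    exact (hcomp.sub_const (f y)).sub hlin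
  -- derivative bound on [0,1]
  have hbound : ∀ t ∈ Set.Icc (0:ℝ) 1,
      (inner ℝ (gradient f (y + t • s)) s : ℝ) - (inner ℝ (gradient f y) s : ℝ) ≤ A * t := by
    intro t ht
    obtain ⟨ht0, ht1⟩ := ht
    have hdiff : (inner ℝ (gradient f (y + t • s)) s : ℝ) - (inner ℝ (gradient f y) s : ℝ)
        = (inner ℝ (gradient f (y + t • s) - gradient f y) s : ℝ) := by
      rw [inner_sub_left]
    rw [hdiff]
    have h1 : (inner ℝ (gradient f (y + t • s) - gradient f y) s : ℝ)
        ≤ dualNorm N (gradient f (y + t • s) - gradient f y) * N s :=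
      inner_le_dual N hN_add hN_smul hN_pos _ _
    have h2 := hsmooth (y + t • s) y
    have hts : y + t • s - y = t • s := by abel
    rw [hts] at h2
    have hNts : N (t • s) = t * N s := by rw [hN_smul, abs_of_nonneg ht0]
    rw [hNts] at h2
    have hexp : Real.exp (L₁ * (t * N s)) ≤ Real.exp (L₁ * N s) := by
      apply Real.exp_le_exp.mpr
      apply mul_le_mul_of_nonneg_left _ hL₁
      nlinarith
    have h3 : dualNorm N (gradient f (y + t • s) - gradient f y)
        ≤ K * Real.exp (L₁ * N s) * (t * N s) := by
      calc dualNorm N (gradient f (y + t • s) - gradient f y)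
          ≤ K * Real.exp (L₁ * (t * N s)) * (t * N s) := h2
        _ ≤ K * Real.exp (L₁ * N s) * (t * N s) := by
            apply mul_le_mul_of_nonneg_right _ (by positivity)
            exact mul_le_mul_of_nonneg_left hexp hK0
    calc (inner ℝ (gradient f (y + t • s) - gradient f y) s : ℝ)
        ≤ dualNorm N (gradient f (y + t • s) - gradient f y) * N s := h1
      _ ≤ K * Real.exp (L₁ * N s) * (t * N s) * N s :=
          mul_le_mul_of_nonneg_right h3 hNs0
      _ = A * t := by rw [hA]; ring
  -- monotonicity argument
  set F : ℝ → ℝ := fun t => A / 2 * t ^ 2 - h t with hF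
  have hFderiv : ∀ t : ℝ, HasDerivAt F
      (A * t - ((inner ℝ (gradient f (y + t • s)) s : ℝ) - (inner ℝ (gradient f y) s : ℝ))) t := by
    intro t
    have h1 : HasDerivAt (fun t : ℝ => A / 2 * t ^ 2) (A * t) t := by
      have := (hasDerivAt_pow 2 t).const_mul (A / 2)
      simpa using this.congr_deriv (by ring)
    exact h1.sub (hderiv t)
  have hmono : MonotoneOn F (Set.Icc (0:ℝ) 1) := by
    apply monotoneOn_of_deriv_nonneg (convex_Icc 0 1)
    · exact (Continuous.continuousOn (by
        exact continuous_iff_continuousAt.mpr fun t => (hFderiv t).continuousAt))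
    · intro t ht
      exact (hFderiv t).differentiableAt.differentiableWithinAt
    · intro t ht
      rw [interior_Icc] at ht
      rw [(hFderiv t).deriv]
      have := hbound t ⟨le_of_lt ht.1, le_of_lt ht.2⟩
      linarith
  have hF0 : F 0 = 0 := by
    simp [hF, hh]
  have hF01 : F 0 ≤ F 1 := hmono (by norm_num) (by norm_num) zero_le_one
  have hF1 : F 1 = A / 2 - h 1 := by simp [hF]
  have hh1 : h 1 = f x - f y - (inner ℝ (gradient f y) s : ℝ) := by
    have hx : y + s = x := by rw [hs]; abel
    simp [hh, hx]
  rw [hF1, hF0, hh1] at hF01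
  rw [hA] at hF01
  linarith
end

section
/- Suppose f : ℝ^d → ℝ is twice differentiable and satisfies the symmetric (L₀,L₁)-Lipschitz gradient condition with respect to norm ‖·‖ and dual norm ‖·‖₊. Then for every x, the operator norm of the Hessian satisfies sup_{u≠0} ‖∇²f(x)u‖₊ / ‖u‖ ≤ L₀ + L₁‖∇f(x)‖₊. -/
open Filter Topology

section Aux

variable {d : ℕ} {N : EuclideanSpace ℝ (Fin d) → ℝ}

lemma myN_zero (hN_smul : ∀ (c : ℝ) x, N (c • x) = |c| * N x) : N 0 = 0 := by
  have := hN_smul 0 0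
  simpa using this

lemma myN_nonneg (hN_add : ∀ x y, N (x + y) ≤ N x + N y)
    (hN_smul : ∀ (c : ℝ) x, N (c • x) = |c| * N x) (x : EuclideanSpace ℝ (Fin d)) :
    0 ≤ N x := by
  have h0 : x + (-1 : ℝ) • x = 0 := by module
  have h1 := hN_add x ((-1 : ℝ) • x)
  rw [h0, hN_smul, myN_zero hN_smul] at h1
  simp at h1
  linarith

lemma myN_le (hN_add : ∀ x y, N (x + y) ≤ N x + N y)
    (hN_smul : ∀ (c : ℝ) x, N (c • x) = |c| * N x) :
    ∃ M : ℝ, 0 ≤ M ∧ ∀ x, N x ≤ M * ‖x‖ := by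
  refine ⟨∑ i, N (EuclideanSpace.single i 1), Finset.sum_nonneg fun i _ =>
    myN_nonneg hN_add hN_smul _, fun x => ?_⟩
  have hdec : ∑ i, x i • EuclideanSpace.single i (1 : ℝ) = x := by
    have := (EuclideanSpace.basisFun (Fin d) ℝ).sum_repr x
    simpa [EuclideanSpace.basisFun_repr, EuclideanSpace.basisFun_apply] using this
  calc N x = N (∑ i, x i • EuclideanSpace.single i (1 : ℝ)) := by rw [hdec]
    _ ≤ ∑ i, N (x i • EuclideanSpace.single i (1 : ℝ)) :=
        Finset.le_sum_of_subadditive N (myN_zero hN_smul).le hN_add _ _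
    _ = ∑ i, |x i| * N (EuclideanSpace.single i (1 : ℝ)) := by simp [hN_smul]
    _ ≤ ∑ i, ‖x‖ * N (EuclideanSpace.single i (1 : ℝ)) := by
        refine Finset.sum_le_sum fun i _ => ?_
        have h1 : |x i| ≤ ‖x‖ := by
          have h2 := abs_real_inner_le_norm (EuclideanSpace.single i (1:ℝ)) x
          simpa [EuclideanSpace.inner_single_left, EuclideanSpace.norm_single] using h2
        exact mul_le_mul_of_nonneg_right h1 (myN_nonneg hN_add hN_smul _)
    _ = (∑ i, N (EuclideanSpace.single i (1 : ℝ))) * ‖x‖ := by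
        rw [← Finset.mul_sum, mul_comm]

lemma myN_continuous (hN_add : ∀ x y, N (x + y) ≤ N x + N y)
    (hN_smul : ∀ (c : ℝ) x, N (c • x) = |c| * N x) : Continuous N := by
  obtain ⟨M, hM0, hM⟩ := myN_le hN_add hN_smul
  have key : ∀ a b : EuclideanSpace ℝ (Fin d), N a - N b ≤ M * ‖a - b‖ := by
    intro a b
    have h1 : N a ≤ N (a - b) + N b := by
      have := hN_add (a - b) b
      simpa using this
    have := hM (a - b)
    linarith
  refine (LipschitzWith.of_dist_le_mul (K := M.toNNReal) fun a b => ?_).continuous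
  rw [Real.dist_eq, abs_sub_le_iff]
  rw [Real.coe_toNNReal M hM0]
  constructor
  · exact (key a b).trans (le_of_eq (by rw [dist_eq_norm]))
  · exact (key b a).trans (le_of_eq (by rw [dist_eq_norm, norm_sub_rev]))

lemma myN_ge (hN_add : ∀ x y, N (x + y) ≤ N x + N y)
    (hN_smul : ∀ (c : ℝ) x, N (c • x) = |c| * N x)
    (hN_pos : ∀ x, x ≠ 0 → 0 < N x) :
    ∃ c : ℝ, 0 < c ∧ ∀ x, c * ‖x‖ ≤ N x := by
  by_cases hd : ∀ x : EuclideanSpace ℝ (Fin d), x = 0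
  · exact ⟨1, one_pos, fun x => by rw [hd x]; simp [myN_zero hN_smul]⟩
  push_neg at hd
  obtain ⟨w, hw⟩ := hd
  have hwmem : (‖w‖⁻¹ • w) ∈ Metric.sphere (0 : EuclideanSpace ℝ (Fin d)) 1 := by
    simp [norm_smul, inv_mul_cancel₀ (norm_ne_zero_iff.mpr hw)]
  obtain ⟨v₀, hv₀mem, hv₀min⟩ := (isCompact_sphere (0 : EuclideanSpace ℝ (Fin d)) 1).exists_isMinOn
    ⟨_, hwmem⟩ (myN_continuous hN_add hN_smul).continuousOn
  have hv₀norm : ‖v₀‖ = 1 := by simpa using hv₀mem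
  have hv₀ne : v₀ ≠ 0 := by
    intro h; rw [h] at hv₀norm; simp at hv₀norm
  refine ⟨N v₀, hN_pos v₀ hv₀ne, fun x => ?_⟩
  rcases eq_or_ne x 0 with rfl | hx
  · simp [myN_zero hN_smul]
  · have hxn : (0 : ℝ) < ‖x‖ := norm_pos_iff.mpr hx
    have hmem : (‖x‖⁻¹ • x) ∈ Metric.sphere (0 : EuclideanSpace ℝ (Fin d)) 1 := by
      simp [norm_smul, abs_of_nonneg (inv_nonneg.mpr hxn.le), inv_mul_cancel₀ hxn.ne']
    have h1 : N v₀ ≤ N (‖x‖⁻¹ • x) := hv₀min hmem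
    rw [hN_smul, abs_of_nonneg (inv_nonneg.mpr hxn.le)] at h1
    calc N v₀ * ‖x‖ ≤ (‖x‖⁻¹ * N x) * ‖x‖ := mul_le_mul_of_nonneg_right h1 hxn.le
      _ = N x := by field_simp

end Aux

section DualAux

variable {d : ℕ} {N : EuclideanSpace ℝ (Fin d) → ℝ} {c : ℝ}

lemma dn_mem_zero (hN_smul : ∀ (c : ℝ) x, N (c • x) = |c| * N x) :
    (0 : EuclideanSpace ℝ (Fin d)) ∈ {v | N v ≤ 1} := by
  simp [Set.mem_setOf_eq, myN_zero hN_smul]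

lemma dn_bddAbove (hc : 0 < c) (hge : ∀ x, c * ‖x‖ ≤ N x) (u : EuclideanSpace ℝ (Fin d)) :
    BddAbove ((fun v => (inner ℝ u v : ℝ)) '' {v | N v ≤ 1}) := by
  refine ⟨‖u‖ * c⁻¹, ?_⟩
  rintro r ⟨v, hv, rfl⟩
  have hv' : N v ≤ 1 := hv
  have hvn : ‖v‖ ≤ c⁻¹ := by
    have h1 := hge v
    have h2 : 0 < c⁻¹ := inv_pos.mpr hc
    nlinarith [mul_inv_cancel₀ hc.ne']
  calc (inner ℝ u v : ℝ) ≤ ‖u‖ * ‖v‖ := real_inner_le_norm u v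
    _ ≤ ‖u‖ * c⁻¹ := mul_le_mul_of_nonneg_left hvn (norm_nonneg u)

lemma dn_nonneg (hN_smul : ∀ (c : ℝ) x, N (c • x) = |c| * N x)
    (hc : 0 < c) (hge : ∀ x, c * ‖x‖ ≤ N x) (u : EuclideanSpace ℝ (Fin d)) :
    0 ≤ dualNorm N u := by
  have := le_csSup (dn_bddAbove hc hge u) ⟨0, dn_mem_zero hN_smul, rfl⟩
  simp only [inner_zero_right] at this
  exact this

lemma dn_le (hN_smul : ∀ (c : ℝ) x, N (c • x) = |c| * N x)
    (hc : 0 < c) (hge : ∀ x, c * ‖x‖ ≤ N x) (u : EuclideanSpace ℝ (Fin d)) :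
    dualNorm N u ≤ c⁻¹ * ‖u‖ := by
  refine csSup_le ⟨_, ⟨0, dn_mem_zero hN_smul, rfl⟩⟩ ?_
  rintro r ⟨v, hv, rfl⟩
  have hv' : N v ≤ 1 := hv
  have hvn : ‖v‖ ≤ c⁻¹ := by
    have h1 := hge v
    have h2 : 0 < c⁻¹ := inv_pos.mpr hc
    nlinarith [mul_inv_cancel₀ hc.ne']
  calc (inner ℝ u v : ℝ) ≤ ‖u‖ * ‖v‖ := real_inner_le_norm u v
    _ ≤ ‖u‖ * c⁻¹ := mul_le_mul_of_nonneg_left hvn (norm_nonneg u)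
    _ = c⁻¹ * ‖u‖ := mul_comm _ _

lemma dn_zero (hN_smul : ∀ (c : ℝ) x, N (c • x) = |c| * N x)
    (hc : 0 < c) (hge : ∀ x, c * ‖x‖ ≤ N x) :
    dualNorm N (0 : EuclideanSpace ℝ (Fin d)) = 0 := by
  refine le_antisymm ?_ (dn_nonneg hN_smul hc hge 0)
  refine csSup_le ⟨_, ⟨0, dn_mem_zero hN_smul, rfl⟩⟩ ?_
  rintro r ⟨v, hv, rfl⟩
  simp

lemma dn_add (hN_smul : ∀ (c : ℝ) x, N (c • x) = |c| * N x)
    (hc : 0 < c) (hge : ∀ x, c * ‖x‖ ≤ N x) (a b : EuclideanSpace ℝ (Fin d)) :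
    dualNorm N (a + b) ≤ dualNorm N a + dualNorm N b := by
  refine csSup_le ⟨_, ⟨0, dn_mem_zero hN_smul, rfl⟩⟩ ?_
  rintro r ⟨v, hv, rfl⟩
  show (inner ℝ (a + b) v : ℝ) ≤ dualNorm N a + dualNorm N b
  rw [inner_add_left]
  exact add_le_add (le_csSup (dn_bddAbove hc hge a) ⟨v, hv, rfl⟩)
    (le_csSup (dn_bddAbove hc hge b) ⟨v, hv, rfl⟩)

lemma dn_sub_le (hN_smul : ∀ (c : ℝ) x, N (c • x) = |c| * N x)
    (hc : 0 < c) (hge : ∀ x, c * ‖x‖ ≤ N x) (a b : EuclideanSpace ℝ (Fin d)) :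
    dualNorm N a ≤ dualNorm N (a - b) + dualNorm N b := by
  have := dn_add hN_smul hc hge (a - b) b
  simpa using this

lemma dn_smul_le (hN_smul : ∀ (c : ℝ) x, N (c • x) = |c| * N x)
    (hc : 0 < c) (hge : ∀ x, c * ‖x‖ ≤ N x) (t : ℝ) (a : EuclideanSpace ℝ (Fin d)) :
    dualNorm N (t • a) ≤ |t| * dualNorm N a := by
  refine csSup_le ⟨_, ⟨0, dn_mem_zero hN_smul, rfl⟩⟩ ?_
  rintro r ⟨v, hv, rfl⟩
  show (inner ℝ (t • a) v : ℝ) ≤ |t| * dualNorm N a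
  rcases eq_or_ne t 0 with rfl | ht
  · simp [mul_nonneg (abs_nonneg (0:ℝ)) (dn_nonneg hN_smul hc hge a)]
  · have habs : |t| ≠ 0 := abs_ne_zero.mpr ht
    have hsv : N ((t / |t|) • v) ≤ 1 := by
      rw [hN_smul]
      have habs1 : abs (t / abs t) = 1 := by
        rw [abs_div, abs_abs, div_self habs]
      rw [habs1, one_mul]
      exact hv
    have heq : (inner ℝ (t • a) v : ℝ) = |t| * (inner ℝ a ((t / |t|) • v) : ℝ) := by
      rw [real_inner_smul_left, real_inner_smul_right]
      field_simp
    rw [heq]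
    exact mul_le_mul_of_nonneg_left (le_csSup (dn_bddAbove hc hge a) ⟨_, hsv, rfl⟩)
      (abs_nonneg t)

lemma dn_continuous (hN_smul : ∀ (c : ℝ) x, N (c • x) = |c| * N x)
    (hc : 0 < c) (hge : ∀ x, c * ‖x‖ ≤ N x) :
    Continuous (dualNorm N) := by
  have key : ∀ a b : EuclideanSpace ℝ (Fin d), dualNorm N a - dualNorm N b ≤ c⁻¹ * ‖a - b‖ := by
    intro a b
    have h1 := dn_sub_le hN_smul hc hge a b
    have h2 := dn_le hN_smul hc hge (a - b)
    linarith
  refine (LipschitzWith.of_dist_le_mul (K := (c⁻¹).toNNReal) fun a b => ?_).continuous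
  rw [Real.dist_eq, abs_sub_le_iff, Real.coe_toNNReal _ (inv_pos.mpr hc).le]
  constructor
  · exact (key a b).trans (le_of_eq (by rw [dist_eq_norm]))
  · exact (key b a).trans (le_of_eq (by rw [dist_eq_norm, norm_sub_rev]))

end DualAux


/-- If `f` is twice differentiable and its gradient is symmetrically `(L₀,L₁)`-Lipschitz
continuous w.r.t. the norm `N` and its dual, then for every `x` and every `u ≠ 0`,
`‖∇²f(x)u‖₊ / ‖u‖ ≤ L₀ + L₁‖∇f(x)‖₊`. -/
theorem stmt_6 {d : ℕ} (f : EuclideanSpace ℝ (Fin d) → ℝ)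
    (hf : Differentiable ℝ f) (hf' : Differentiable ℝ (gradient f))
    (N : EuclideanSpace ℝ (Fin d) → ℝ)
    (hN_add : ∀ x y, N (x + y) ≤ N x + N y)
    (hN_smul : ∀ (c : ℝ) x, N (c • x) = |c| * N x)
    (hN_pos : ∀ x, x ≠ 0 → 0 < N x)
    (L₀ L₁ : ℝ) (hL₀ : 0 ≤ L₀) (hL₁ : 0 ≤ L₁)
    (hsmooth : ∀ x y,
      dualNorm N (gradient f x - gradient f y) ≤
        (L₀ + L₁ * sSup ((fun θ : ℝ => dualNorm N (gradient f (θ • x + (1 - θ) • y))) ''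
          Set.Icc 0 1)) * N (x - y)) :
    ∀ x, ∀ u, u ≠ 0 →
      dualNorm N (fderiv ℝ (gradient f) x u) / N u ≤ L₀ + L₁ * dualNorm N (gradient f x) := by
  intro x u hu
  obtain ⟨c, hc, hge⟩ := myN_ge hN_add hN_smul hN_pos
  set D := dualNorm N (gradient f x) with hD
  have hNu : 0 < N u := hN_pos u hu
  rw [div_le_iff₀ hNu]
  refine le_of_forall_pos_le_add fun ε hε => ?_
  set ε₂ := ε / (L₁ * N u + 1) with hε₂def
  have hden : 0 < L₁ * N u + 1 := by positivity
  have hε₂ : 0 < ε₂ := div_pos hε hden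
  -- the derivative of t ↦ ∇f(x + t u) at 0
  have hline : HasDerivAt (fun t : ℝ => x + t • u) u 0 := by
    have h1 : HasDerivAt (fun t : ℝ => t • u) ((1 : ℝ) • u) 0 :=
      (hasDerivAt_id (0 : ℝ)).smul_const u
    simpa using h1.const_add x
  have hg : HasDerivAt (fun t : ℝ => gradient f (x + t • u)) (fderiv ℝ (gradient f) x u) 0 := by
    have h2 := (hf' (x + (0 : ℝ) • u)).hasFDerivAt.comp_hasDerivAt 0 hline
    simp only [zero_smul, add_zero] at h2
    exact h2
  have hslope : Filter.Tendsto (slope (fun t : ℝ => gradient f (x + t • u)) 0) (𝓝[≠] 0)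
      (𝓝 (fderiv ℝ (gradient f) x u)) := hasDerivAt_iff_tendsto_slope.mp hg
  have htend : Filter.Tendsto
      (fun t => dualNorm N (slope (fun t : ℝ => gradient f (x + t • u)) 0 t)) (𝓝[≠] 0)
      (𝓝 (dualNorm N (fderiv ℝ (gradient f) x u))) :=
    ((dn_continuous hN_smul hc hge).tendsto _).comp hslope
  -- the function s ↦ ‖∇f(x+su) - ∇f(x)‖₊ is continuous and vanishes at 0
  have hφcont : ContinuousAt (fun s : ℝ => dualNorm N (gradient f (x + s • u) - gradient f x)) 0 := by
    apply Continuous.continuousAt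
    exact (dn_continuous hN_smul hc hge).comp
      ((hf'.continuous.comp (continuous_const.add (continuous_id.smul continuous_const))).sub
        continuous_const)
  have hφ0 : dualNorm N (gradient f (x + (0 : ℝ) • u) - gradient f x) = 0 := by
    simp [dn_zero hN_smul hc hge]
  obtain ⟨δ, hδ, hδprop⟩ := Metric.continuousAt_iff.mp hφcont ε₂ hε₂
  have hev : ∀ᶠ t in 𝓝[≠] (0 : ℝ),
      dualNorm N (slope (fun t : ℝ => gradient f (x + t • u)) 0 t)
        ≤ (L₀ + L₁ * (D + ε₂)) * N u := by
    have h1 : ∀ᶠ t in 𝓝 (0 : ℝ), |t| < δ := by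
      filter_upwards [Metric.ball_mem_nhds (0 : ℝ) hδ] with t ht
      simpa [Real.dist_eq] using ht
    filter_upwards [nhdsWithin_le_nhds h1, self_mem_nhdsWithin] with t ht htne
    have htne' : (t : ℝ) ≠ 0 := htne
    have htabs : |t| ≠ 0 := abs_ne_zero.mpr htne'
    -- bound the sup over the segment
    have hSbound : sSup ((fun θ : ℝ => dualNorm N (gradient f (θ • (x + t • u) + (1 - θ) • x))) ''
        Set.Icc 0 1) ≤ D + ε₂ := by
      refine csSup_le ⟨_, ⟨0, Set.mem_Icc.mpr ⟨le_refl 0, zero_le_one⟩, rfl⟩⟩ ?_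
      rintro r ⟨θ, hθ, rfl⟩
      rw [Set.mem_Icc] at hθ
      have hpt : θ • (x + t • u) + (1 - θ) • x = x + (θ * t) • u := by module
      show dualNorm N (gradient f (θ • (x + t • u) + (1 - θ) • x)) ≤ D + ε₂
      rw [hpt]
      have h5 : dualNorm N (gradient f (x + (θ * t) • u))
          ≤ dualNorm N (gradient f (x + (θ * t) • u) - gradient f x) + D := by
        exact dn_sub_le hN_smul hc hge _ _
      have h6 : |θ * t| < δ := by
        rw [abs_mul]
        have : |θ| * |t| ≤ 1 * |t| :=
          mul_le_mul_of_nonneg_right (abs_le.mpr ⟨by linarith [hθ.1], hθ.2⟩) (abs_nonneg t)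
        calc |θ| * |t| ≤ 1 * |t| := this
          _ = |t| := one_mul _
          _ < δ := ht
      have h7 := hδprop (show dist (θ * t) (0 : ℝ) < δ by rw [Real.dist_eq, sub_zero]; exact h6)
      rw [Real.dist_eq] at h7
      have h8 : dualNorm N (gradient f (x + (θ * t) • u) - gradient f x) < ε₂ := by
        refine lt_of_le_of_lt (le_abs_self _) ?_
        calc |dualNorm N (gradient f (x + (θ * t) • u) - gradient f x)|
            = |dualNorm N (gradient f (x + (θ * t) • u) - gradient f x)
              - dualNorm N (gradient f (x + (0:ℝ) • u) - gradient f x)| := by rw [hφ0, sub_zero]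
          _ < ε₂ := h7
      linarith
    -- apply the smoothness assumption along the segment from x to x + t u
    have h9 := hsmooth (x + t • u) x
    have h10 : (x + t • u) - x = t • u := by module
    rw [h10, hN_smul] at h9
    have h11 : (L₀ + L₁ * sSup ((fun θ : ℝ =>
          dualNorm N (gradient f (θ • (x + t • u) + (1 - θ) • x))) '' Set.Icc 0 1)) * (|t| * N u)
        ≤ (L₀ + L₁ * (D + ε₂)) * (|t| * N u) := by
      refine mul_le_mul_of_nonneg_right ?_ (by positivity)
      have := mul_le_mul_of_nonneg_left hSbound hL₁
      linarith
    have hts : slope (fun t : ℝ => gradient f (x + t • u)) 0 t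
        = t⁻¹ • (gradient f (x + t • u) - gradient f x) := by
      rw [slope_def_module]
      simp
    rw [hts]
    calc dualNorm N (t⁻¹ • (gradient f (x + t • u) - gradient f x))
        ≤ |t⁻¹| * dualNorm N (gradient f (x + t • u) - gradient f x) :=
          dn_smul_le hN_smul hc hge _ _
      _ ≤ |t⁻¹| * ((L₀ + L₁ * (D + ε₂)) * (|t| * N u)) :=
          mul_le_mul_of_nonneg_left (h9.trans h11) (abs_nonneg _)
      _ = (L₀ + L₁ * (D + ε₂)) * N u := by
          rw [abs_inv]
          field_simp
  have hfinal := le_of_tendsto htend hev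
  have h3 : L₁ * N u / (L₁ * N u + 1) ≤ 1 := (div_le_one hden).mpr (by linarith [mul_nonneg hL₁ hNu.le])
  have h4 : L₁ * ε₂ * N u ≤ ε := by
    have heq : L₁ * ε₂ * N u = ε * (L₁ * N u / (L₁ * N u + 1)) := by
      rw [hε₂def]; ring
    rw [heq]
    calc ε * (L₁ * N u / (L₁ * N u + 1)) ≤ ε * 1 := mul_le_mul_of_nonneg_left h3 hε.le
      _ = ε := mul_one ε
  nlinarith [hfinal]
end
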